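/- Let Γ = Γ₀ ⊕ Γ₁ be an associative supercommutative unital superalgebra over a field of characteristic ≠ 2 with an odd derivation D, and define the superalgebra JS(Γ,D) on Γ₁ ⊕ Γ₀ by a ∘ b = aD(b) + (−1)^{p(a)}D(a)b. Then JS(Γ,D) has no unit element: there is no e with e ∘ a = a for all a. -/
import Mathlib


/-- Let `Γ = Γ₀ ⊕ Γ₁` be an associative supercommutative unital superalgebra
over a field of characteristic `≠ 2` with an odd derivation `D`, and define the
superalgebra `JS(Γ, D)` on `Γ₁ ⊕ Γ₀` by `a ∘ b = aD(b) + (−1)^{p(a)}D(a)b`.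
Then `JS(Γ, D)` has no unit element: there is no `e` (necessarily lying in the
even part `Γ₁` of `JS(Γ, D)`) with `e ∘ a = a` for all `a`. -/
theorem stmt18 (F : Type*) [Field F] (hchar : (2 : F) ≠ 0)
    (Γ : Type*) [Ring Γ] [Algebra F Γ]
    (G : ZMod 2 → Submodule F Γ)
    [SetLike.GradedMonoid G] [DirectSum.Decomposition G]
    (hsc : ∀ i j : ZMod 2, ∀ a ∈ G i, ∀ b ∈ G j,
      a * b = (-1 : Γ) ^ (i.val * j.val) * (b * a))
    (D : Γ →ₗ[F] Γ) (hD : D ≠ 0)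
    (hodd : ∀ i : ZMod 2, ∀ a ∈ G i, D a ∈ G (i + 1))
    (hleib : ∀ i : ZMod 2, ∀ a ∈ G i, ∀ b : Γ,
      D (a * b) = D a * b + (-1 : Γ) ^ i.val * (a * D b)) :
    ¬ ∃ e ∈ G 1, ∀ a : Γ, e * D a + D e * a = a := by
  rintro ⟨e, he, h⟩
  have h1mem : (1 : Γ) ∈ G 0 := SetLike.one_mem_graded G
  have hD1 : D 1 = 0 := by
    have := hleib 0 1 h1mem 1
    simp at this
    exact this
  have hDe : D e = 1 := by
    have := h 1
    rw [hD1] at this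
    simpa using this
  have he0 : e = 0 := by
    have := h e
    rw [hDe] at this
    simp at this
    exact this
  have h01 : (1 : Γ) = 0 := by rw [← hDe, he0, map_zero]
  have : Subsingleton Γ := subsingleton_of_zero_eq_one h01.symm
  exact hD (Subsingleton.elim _ _)
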